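/- Suppose B has rank n_p. If λ ∈ ℝ and (u; p) ∈ ℝ^{n_u+n_p} is nonzero with Ā (u; p) = λ P (u; p), then λ > 0. In particular, every real eigenvalue of the preconditioned matrix P⁻¹ Ā is positive. -/

import Mathlib

/-!
Pair the first block row of `Ā (u; p) = λ P (u; p)` with `u` and use the second block row,
`B u = -(λ/α) Q p`, to express `uᵀ Bᵀ p` and `uᵀ S u` through `q = pᵀ Q p`. With `a = uᵀ A u`
this leaves the scalar identity `(1 - λ) a = (λ/α) q (γ λ²/α + 1 - λ)`. For `λ ≤ 0` its two sides
have opposite signs, so `a = 0` and `λ q = 0`; hence `u = 0`, and then `p = 0`, either because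
`q = 0` or, when `λ = 0`, because the first block row reduces to `Bᵀ p = 0` and `Bᵀ` is injective.
-/

open Matrix

theorem Sum.smul_elim {α β γ M : Type*} [SMul M γ] (c : M) (f : α → γ) (g : β → γ) :
    c • Sum.elim f g = Sum.elim (c • f) (c • g) := by
  ext (i | j) <;> rfl

namespace Matrix

theorem mulVec_injective_of_rank_eq_card {m n K : Type*} [Fintype m] [Fintype n] [Field K]
    {M : Matrix m n K} (hM : M.rank = Fintype.card n) : Function.Injective M.mulVec := by
  have hker := LinearMap.finrank_range_add_finrank_ker M.mulVecLin
  rw [← Matrix.rank, hM, Module.finrank_fintype_fun_eq_card, Nat.add_eq_left,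
    Submodule.finrank_eq_zero] at hker
  exact LinearMap.ker_eq_bot.mp hker

theorem PosDef.dotProduct_mulVec_self_nonneg {n : Type*} [Fintype n] {M : Matrix n n ℝ}
    (hM : M.PosDef) (x : n → ℝ) : 0 ≤ x ⬝ᵥ M *ᵥ x := by
  simpa using hM.posSemidef.dotProduct_mulVec_nonneg x

theorem PosDef.eq_zero_of_dotProduct_mulVec_self_eq_zero {n : Type*} [Fintype n]
    {M : Matrix n n ℝ} (hM : M.PosDef) {x : n → ℝ} (h : x ⬝ᵥ M *ᵥ x = 0) : x = 0 := by
  by_contra hx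
  simpa [h] using hM.dotProduct_mulVec_pos hx

section SaddlePoint

variable {m n R : Type*} [Fintype m] [Fintype n] [CommRing R]
  {B : Matrix n m R} {Q : Matrix n n R} {u : m → R} {p : n → R} {c : R}

theorem dotProduct_transpose_mulVec_of_mulVec_eq (h : B *ᵥ u = c • Q *ᵥ p) :
    u ⬝ᵥ Bᵀ *ᵥ p = c * (p ⬝ᵥ Q *ᵥ p) := by
  rw [dotProduct_mulVec, vecMul_transpose, h, smul_dotProduct, smul_eq_mul, dotProduct_comm]

theorem dotProduct_schur_mulVec_of_mulVec_eq [DecidableEq n] (hQ : IsUnit Q.det)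
    (h : B *ᵥ u = c • Q *ᵥ p) : u ⬝ᵥ (Bᵀ * Q⁻¹ * B) *ᵥ u = c ^ 2 * (p ⬝ᵥ Q *ᵥ p) := by
  rw [← mulVec_mulVec, ← mulVec_mulVec, dotProduct_mulVec, vecMul_transpose, h, mulVec_smul,
    mulVec_mulVec, nonsing_inv_mul Q hQ, one_mulVec, smul_dotProduct, dotProduct_smul,
    smul_eq_mul, smul_eq_mul, dotProduct_comm]
  ring

end SaddlePoint

theorem augmentedLagrangian_eigen_energy_identity {m n : Type*} [Fintype m] [Fintype n]
    [DecidableEq n] {A : Matrix m m ℝ} {B : Matrix n m ℝ} {Q : Matrix n n ℝ} (hQ : IsUnit Q.det)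
    {γ α lam : ℝ} {u : m → ℝ} {p : n → ℝ}
    (h₁ : (A + γ • (Bᵀ * Q⁻¹ * B)) *ᵥ u + Bᵀ *ᵥ p
      = lam • ((A + γ • (Bᵀ * Q⁻¹ * B)) *ᵥ u + ((1 - γ / α) • Bᵀ) *ᵥ p))
    (h₂ : B *ᵥ u = (-(lam / α)) • Q *ᵥ p) :
    (1 - lam) * (u ⬝ᵥ A *ᵥ u) = lam / α * (p ⬝ᵥ Q *ᵥ p) * (γ * lam ^ 2 / α + 1 - lam) := by
  have hpair := congrArg (u ⬝ᵥ ·) h₁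
  simp only [dotProduct_add, dotProduct_smul, add_mulVec, smul_mulVec, smul_eq_mul,
    dotProduct_schur_mulVec_of_mulVec_eq hQ h₂,
    dotProduct_transpose_mulVec_of_mulVec_eq h₂] at hpair
  linear_combination hpair

end Matrix

theorem eq_zero_and_mul_eq_zero_of_energy_identity {a q γ α lam : ℝ} (ha : 0 ≤ a) (hq : 0 ≤ q)
    (hγ : 0 ≤ γ) (hα : 0 < α) (hlam : lam ≤ 0)
    (h : (1 - lam) * a = lam / α * q * (γ * lam ^ 2 / α + 1 - lam)) :
    a = 0 ∧ lam * q = 0 := by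
  have hfactor : 0 < γ * lam ^ 2 / α + 1 - lam := by
    have : 0 ≤ γ * lam ^ 2 / α := by positivity
    linarith
  have hlamq : lam / α * q ≤ 0 :=
    mul_nonpos_of_nonpos_of_nonneg (div_nonpos_of_nonpos_of_nonneg hlam hα.le) hq
  have hzero : lam / α * q * (γ * lam ^ 2 / α + 1 - lam) = 0 :=
    le_antisymm (mul_nonpos_of_nonpos_of_nonneg hlamq hfactor.le)
      (h ▸ mul_nonneg (by linarith) ha)
  refine ⟨(mul_eq_zero.mp (h.trans hzero)).resolve_left (by linarith), ?_⟩
  have hlamq_zero : lam / α * q = 0 := (mul_eq_zero.mp hzero).resolve_right hfactor.ne'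
  field_simp at hlamq_zero
  linarith

theorem stmt_14_general (nu np : ℕ)
    (A : Matrix (Fin nu) (Fin nu) ℝ) (hA : A.PosDef)
    (B : Matrix (Fin np) (Fin nu) ℝ) (hB : B.rank = np)
    (Q : Matrix (Fin np) (Fin np) ℝ) (hQ : Q.PosDef)
    (γ α : ℝ) (hγ : 0 < γ) (hα : 0 < α)
    (S : Matrix (Fin nu) (Fin nu) ℝ) (hS : S = Bᵀ * Q⁻¹ * B)
    (Abar P : Matrix (Fin nu ⊕ Fin np) (Fin nu ⊕ Fin np) ℝ)
    (hAbar : Abar = Matrix.fromBlocks (A + γ • S) Bᵀ B 0)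
    (hP : P = Matrix.fromBlocks (A + γ • S) ((1 - γ / α) • Bᵀ)
        0 ((-α⁻¹) • Q))
    (lam : ℝ) (u : Fin nu → ℝ) (p : Fin np → ℝ)
    (hne : Sum.elim u p ≠ 0)
    (heig : Abar.mulVec (Sum.elim u p) = lam • P.mulVec (Sum.elim u p)) :
    0 < lam := by
  subst hAbar hP hS
  simp only [fromBlocks_mulVec, Sum.elim_comp_inl, Sum.elim_comp_inr, Sum.smul_elim,
    Sum.elim_eq_iff] at heig
  obtain ⟨h₁, h₂⟩ := heig
  have hBu : B *ᵥ u = (-(lam / α)) • Q *ᵥ p := by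
    simp only [zero_mulVec, add_zero, zero_add, smul_mulVec] at h₂
    rw [h₂, div_eq_mul_inv]
    module
  by_contra! hlam
  obtain ⟨ha, hq⟩ := eq_zero_and_mul_eq_zero_of_energy_identity
    (hA.dotProduct_mulVec_self_nonneg u) (hQ.dotProduct_mulVec_self_nonneg p) hγ.le hα hlam
    (augmentedLagrangian_eigen_energy_identity ((isUnit_iff_isUnit_det Q).mp hQ.isUnit) h₁ hBu)
  obtain rfl := hA.eq_zero_of_dotProduct_mulVec_self_eq_zero ha
  have hp : p = 0 := by
    rcases mul_eq_zero.mp hq with rfl | hq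
    · refine mulVec_injective_of_rank_eq_card (M := Bᵀ) ?_ (by simpa using h₁)
      rw [rank_transpose, hB, Fintype.card_fin]
    · exact hQ.eq_zero_of_dotProduct_mulVec_self_eq_zero hq
  exact hne (by simp [hp])

/-- Every real generalized eigenvalue of the preconditioned matrix `P⁻¹ Ā` is
positive: if `B` has rank `n_p`, `(u; p) ≠ 0` and `Ā (u; p) = λ P (u; p)`,
then `λ > 0`. -/
theorem stmt_14 (nu np : ℕ) (hnu : 0 < nu) (hnp : 0 < np) (hle : np ≤ nu)
    (A : Matrix (Fin nu) (Fin nu) ℝ) (hA : A.PosDef)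
    (B : Matrix (Fin np) (Fin nu) ℝ) (hB : B.rank = np)
    (Q : Matrix (Fin np) (Fin np) ℝ) (hQ : Q.PosDef)
    (γ α : ℝ) (hγ : 0 < γ) (hα : 0 < α)
    (S : Matrix (Fin nu) (Fin nu) ℝ) (hS : S = Bᵀ * Q⁻¹ * B)
    (Abar P : Matrix (Fin nu ⊕ Fin np) (Fin nu ⊕ Fin np) ℝ)
    (hAbar : Abar = Matrix.fromBlocks (A + γ • S) Bᵀ B 0)
    (hP : P = Matrix.fromBlocks (A + γ • S) ((1 - γ / α) • Bᵀ)
        0 ((-α⁻¹) • Q))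
    (lam : ℝ) (u : Fin nu → ℝ) (p : Fin np → ℝ)
    (hne : Sum.elim u p ≠ 0)
    (heig : Abar.mulVec (Sum.elim u p) = lam • P.mulVec (Sum.elim u p)) :
    0 < lam :=
  stmt_14_general nu np A hA B hB Q hQ γ α hγ hα S hS Abar P hAbar hP lam u p hne heig
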